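/- arXiv:2502.08263 — 2 statements merged into one kernel-verified Lean document; each statement's English description precedes it below -/
import Mathlib

section
/- Uniqueness of the associated polynomial (Proposition 2.2): Suppose Γ ≤ GL₂(A) contains Γ(𝔫) for some nonzero ideal 𝔫 ⊆ A, and let f : Ω → L be a nonzero function. Suppose f is quasi-modular of weight k, type m and depth ≤ ℓ for Γ with coefficient family (f₀,…,f_ℓ) where f_ℓ ≠ 0, and also quasi-modular of weight k', type m' and depth ≤ ℓ' for Γ with coefficient family (g₀,…,g_{ℓ'}) where g_{ℓ'} ≠ 0, and assume that every f_i and every g_j is periodic with respect to some nonzero ideal of A (i.e. for each such function h there is a nonzero ideal I ⊆ A with h(z+a) = h(z) for all a ∈ I and z ∈ Ω). Then k = k', ℓ = ℓ', f_i = g_i for all 0 ≤ i ≤ ℓ, and m ≡ m' modulo the order of the subgroup det Γ ≤ 𝔽_q^×. -/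
/-!
For `x ∈ 𝔫` the matrix `(1, 0; x, 1)` lies in `Γ`; with `t = x / (xz + 1)` its quasi-modularity
relation reads `P(z, t) = (1 - zt)^k f(z(1 - zt))`, where `P(z, X) = ∑ fᵢ(z) Xⁱ` is the associated
polynomial. Comparing the two coefficient families at these infinitely many `t` gives
`(1 - zX)^(k'-k)⁺ P = (1 - zX)^(k-k')⁺ P'` in `L[X]`. Degrees then force
`(k'-k)⁺ + ℓ = (k-k')⁺ + ℓ'`, and leading coefficients give
`(-z)^(k'-k)⁺ f_ℓ(z) = (-z)^(k-k')⁺ g_ℓ'(z)`. Since `f_ℓ` and `g_ℓ'` are invariant under an infinite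
group of translations while a nonconstant power of `z` is not, `k = k'`, so `ℓ = ℓ'` and `P = P'`.
Finally `(det γ)^m = (det γ)^m'` on `Γ`, and `det Γ` is a finite, hence cyclic, subgroup of `Lˣ`.
-/

noncomputable section

namespace DrinfeldQM

variable {L : Type*} [Field L]

/-- Entry `(i,j)` of `γ ∈ GL₂(F)`, viewed inside `L`. -/
def Mc (F : Subfield L) (γ : GL (Fin 2) F) (i j : Fin 2) : L :=
  ((γ : Matrix (Fin 2) (Fin 2) F) i j : L)

/-- Determinant of `γ ∈ GL₂(F)`, viewed inside `L`. -/
def detL (F : Subfield L) (γ : GL (Fin 2) F) : L :=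
  ((γ : Matrix (Fin 2) (Fin 2) F).det : L)

/-- Automorphy factor `cz + d`. -/
def jf (F : Subfield L) (γ : GL (Fin 2) F) (z : L) : L :=
  Mc F γ 1 0 * z + Mc F γ 1 1

/-- Fractional linear action of `GL₂(F)` on `L` (restricting to `Ω`). -/
def act (F : Subfield L) (γ : GL (Fin 2) F) (z : L) : L :=
  (Mc F γ 0 0 * z + Mc F γ 0 1) / jf F γ z

/-- The Drinfeld upper half plane `Ω = L ∖ F`. -/
def Omega (F : Subfield L) : Set L := {z | z ∉ F}

/-- The slash operator `f |_{k,m} γ` of weight `k` and type `m`. -/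
def slash (F : Subfield L) (k m : ℤ) (f : L → L) (γ : GL (Fin 2) F) : L → L :=
  fun z => detL F γ ^ m * jf F γ z ^ (-k) * f (act F γ z)

/-- `f` is quasi-modular of weight `k`, type `m` and depth `≤ ℓ` for the set `S ⊆ GL₂(F)`
with coefficient family `fam` (only the indices `0,…,ℓ` of `fam` are relevant). -/
def IsQM (F : Subfield L) (S : Set (GL (Fin 2) F)) (k m : ℤ) (ℓ : ℕ)
    (f : L → L) (fam : ℕ → L → L) : Prop :=
  Set.EqOn (fam 0) f (Omega F) ∧
    ∀ γ ∈ S, ∀ z ∈ Omega F,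
      slash F k m f γ z =
        ∑ i ∈ Finset.range (ℓ + 1), fam i z * (Mc F γ 1 0 / jf F γ z) ^ i

/-- The coefficient family of the `i`-th coefficient `f_i` of a quasi-modular function with
coefficient family `fam`:  `(f_i)_h = ((h+i) choose i) · f_{h+i}`. -/
def shiftFam (i : ℕ) (fam : ℕ → L → L) : ℕ → L → L :=
  fun h z => ((h + i).choose i : L) * fam (h + i) z

/-- The double-slash operator `f ∥_{k,m} γ` of a quasi-modular function of depth `≤ ℓ` with
coefficient family `fam`. -/
def dslash (F : Subfield L) (k m : ℤ) (ℓ : ℕ) (fam : ℕ → L → L)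
    (γ : GL (Fin 2) F) : L → L :=
  fun z => ∑ i ∈ Finset.range (ℓ + 1),
    (-(Mc F γ 1 0) / jf F γ z) ^ i * detL F γ ^ (m - (i : ℤ)) *
      jf F γ z ^ (2 * (i : ℤ) - k) * fam i (act F γ z)

/-- The double-slash operator on polynomial-valued functions `P : Ω → L[X]`:
`(P ∥_{k,m} γ)(z, X) = (det γ)^m (cz+d)^{-k} P(γ·z, ((cz+d)²/det γ)(X - c/(cz+d)))`. -/
def pdslash (F : Subfield L) (k m : ℤ) (P : L → Polynomial L)
    (γ : GL (Fin 2) F) : L → Polynomial L :=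
  fun z =>
    Polynomial.C (detL F γ ^ m * jf F γ z ^ (-k)) *
      (P (act F γ z)).comp
        (Polynomial.C (jf F γ z ^ 2 / detL F γ) *
          (Polynomial.X - Polynomial.C (Mc F γ 1 0 / jf F γ z)))

/-- The associated polynomial `P_f(z, X) = ∑_{i=0}^{ℓ} f_i(z) Xⁱ`. -/
def assocPoly (ℓ : ℕ) (fam : ℕ → L → L) : L → Polynomial L :=
  fun z => ∑ i ∈ Finset.range (ℓ + 1), Polynomial.C (fam i z) * Polynomial.X ^ i

/-- `E` satisfies the functional equation of the false Eisenstein series (weight 2, type 1,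
depth 1, coefficient family `(E, -π⁻¹)`) for all `γ ∈ S`. -/
def EFunEq (F : Subfield L) (S : Set (GL (Fin 2) F)) (π : L) (E : L → L) : Prop :=
  ∀ γ ∈ S, ∀ z ∈ Omega F,
    E (act F γ z) =
      (detL F γ)⁻¹ * jf F γ z ^ 2 * (E z - Mc F γ 1 0 / (π * jf F γ z))

variable {Fq : Type*} [Field Fq] [Fintype Fq]

/-- The image in `L` of a polynomial `r ∈ A = Fq[T]` under `A → F ⊆ L`. -/
def iL (F : Subfield L) (ι : Polynomial Fq →+* F) (r : Polynomial Fq) : L := (ι r : L)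

/-- `γ ∈ GL₂(F)` lies in `Γ₀(𝔞) ⊆ GL₂(A)`: its entries come from a matrix `M` over
`A = Fq[T]` with unit determinant whose lower-left entry lies in `𝔞`.
Taking `𝔞 = ⊤` expresses membership in `GL₂(A)`. -/
def InGamma0 (F : Subfield L) (ι : Polynomial Fq →+* F)
    (𝔞 : Ideal (Polynomial Fq)) (γ : GL (Fin 2) F) : Prop :=
  ∃ M : Matrix (Fin 2) (Fin 2) (Polynomial Fq),
    (∀ i j, iL F ι (M i j) = Mc F γ i j) ∧ IsUnit M.det ∧ M 1 0 ∈ 𝔞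

/-- `γ ∈ GL₂(F)` lies in the principal congruence subgroup `Γ(𝔫) ⊆ GL₂(A)`. -/
def InGammaN (F : Subfield L) (ι : Polynomial Fq →+* F)
    (𝔫 : Ideal (Polynomial Fq)) (γ : GL (Fin 2) F) : Prop :=
  ∃ M : Matrix (Fin 2) (Fin 2) (Polynomial Fq),
    (∀ i j, iL F ι (M i j) = Mc F γ i j) ∧ IsUnit M.det ∧
      ∀ i j, M i j - (1 : Matrix (Fin 2) (Fin 2) (Polynomial Fq)) i j ∈ 𝔫

/-- `g` is modular of weight `w` and type `t` for `Γ₀(𝔞)`. -/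
def IsModularOn (F : Subfield L) (ι : Polynomial Fq →+* F)
    (𝔞 : Ideal (Polynomial Fq)) (w t : ℤ) (g : L → L) : Prop :=
  ∀ γ : GL (Fin 2) F, InGamma0 F ι 𝔞 γ → ∀ z ∈ Omega F, slash F w t g γ z = g z

/-- The degeneracy map `(δ_𝔭 g)(z) = g(℘ z)`. -/
def deltaP (F : Subfield L) (ι : Polynomial Fq →+* F) (℘ : Polynomial Fq)
    (g : L → L) : L → L := fun z => g (iL F ι ℘ * z)

/-- The Atkin–Lehner operator `(U_𝔭 g)(z) = ∑_{Q ∈ A, deg Q < deg ℘} g((z+Q)/℘)`,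
where `Q = ∑ᵢ cᵢ Tⁱ` ranges over polynomials of degree `< deg ℘`. -/
def UP (F : Subfield L) (ι : Polynomial Fq →+* F) (℘ : Polynomial Fq)
    (g : L → L) : L → L :=
  fun z => ∑ c : Fin ℘.natDegree → Fq,
    g ((z + iL F ι (∑ i : Fin ℘.natDegree, Polynomial.C (c i) * Polynomial.X ^ (i : ℕ))) /
      iL F ι ℘)

/-- The `𝔭`-stabilization `E_𝔭 = E - ℘·δ_𝔭E`. -/
def Ep (F : Subfield L) (ι : Polynomial Fq →+* F) (℘ : Polynomial Fq)
    (E : L → L) : L → L := fun z => E z - iL F ι ℘ * deltaP F ι ℘ E z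

open Polynomial

section Polynomials

variable {R : Type*}

lemma coeff_linear_pow_mul [CommSemiring R] (a : R) {p : R[X]} {n d : ℕ}
    (hp : p.natDegree ≤ d) : ((C a * X + 1) ^ n * p).coeff (n + d) = a ^ n * p.coeff d := by
  have hlin : (C a * X + 1).natDegree ≤ 1 := by simpa using natDegree_linear_le (a := a) (b := 1)
  rw [coeff_mul_add_eq_of_natDegree_le ((natDegree_pow_le_of_le n hlin).trans_eq (mul_one n)) hp]
  simpa [coeff_one] using congrArg (· * p.coeff d) (coeff_pow_of_natDegree_le (m := n) hlin)

lemma add_le_add_of_linear_pow_mul_eq [CommRing R] [IsDomain R] {a : R} (ha : a ≠ 0)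
    {p q : R[X]} {n n' d e : ℕ} (h : (C a * X + 1) ^ n' * p = (C a * X + 1) ^ n * q)
    (hp : p.coeff e ≠ 0) (hq : q.natDegree ≤ d) : n' + e ≤ n + d := by
  have hlin : (C a * X + 1).natDegree = 1 := by simpa using natDegree_linear (b := 1) ha
  have hlin0 : C a * X + 1 ≠ 0 := ne_zero_of_natDegree_gt (n := 0) (by omega)
  calc n' + e ≤ n' + p.natDegree := by gcongr; exact le_natDegree_of_ne_zero hp
    _ = ((C a * X + 1) ^ n' * p).natDegree := by
      rw [natDegree_mul (pow_ne_zero _ hlin0) (fun h0 => hp (by simp [h0])), natDegree_pow,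
        hlin, mul_one]
    _ ≤ n + d := by
      rw [h]
      exact natDegree_mul_le.trans
        (add_le_add (natDegree_pow_le.trans (by rw [hlin, mul_one])) hq)

lemma Ideal.infinite_coe_of_ne_bot [Semiring R] [IsDomain R] [Infinite R] {I : Ideal R}
    (hI : I ≠ ⊥) : (I : Set R).Infinite := by
  obtain ⟨b, hbI, hb⟩ := Submodule.exists_mem_ne_zero_of_ne_bot hI
  exact (Set.infinite_range_of_injective (mul_left_injective₀ hb)).mono
    (Set.range_subset_iff.2 fun r => I.mul_mem_left r hbI)

end Polynomials

lemma eval_assocPoly (ℓ : ℕ) (fam : ℕ → L → L) (z t : L) :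
    (assocPoly ℓ fam z).eval t = ∑ i ∈ Finset.range (ℓ + 1), fam i z * t ^ i := by
  simp [assocPoly, eval_finsetSum]

lemma natDegree_assocPoly_le (ℓ : ℕ) (fam : ℕ → L → L) (z : L) :
    (assocPoly ℓ fam z).natDegree ≤ ℓ :=
  natDegree_sum_le_of_forall_le _ _ fun _ hi =>
    (natDegree_C_mul_X_pow_le _ _).trans (Nat.lt_succ_iff.mp (Finset.mem_range.mp hi))

lemma coeff_assocPoly {ℓ i : ℕ} (hi : i ≤ ℓ) (fam : ℕ → L → L) (z : L) :
    (assocPoly ℓ fam z).coeff i = fam i z := by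
  simp [assocPoly, Nat.lt_succ_iff.mpr hi]

section

variable (F : Subfield L)

lemma detL_ne_zero (γ : GL (Fin 2) F) : detL F γ ≠ 0 := by
  simpa [detL] using ((Matrix.isUnit_iff_isUnit_det _).mp γ.isUnit).ne_zero

lemma detL_eq (γ : GL (Fin 2) F) :
    detL F γ = Mc F γ 0 0 * Mc F γ 1 1 - Mc F γ 0 1 * Mc F γ 1 0 := by
  simp [detL, Mc, Matrix.det_fin_two]

lemma ne_zero_of_mem_omega {z : L} (hz : z ∈ Omega F) : z ≠ 0 :=
  fun h => hz (h ▸ F.zero_mem)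

lemma Mc_mem (γ : GL (Fin 2) F) (i j : Fin 2) : Mc F γ i j ∈ F :=
  SetLike.coe_mem _

lemma add_mem_omega {z : L} (hz : z ∈ Omega F) (x : F) : z + x ∈ Omega F :=
  fun h => hz (by simpa using F.sub_mem h x.2)

lemma jf_ne_zero (γ : GL (Fin 2) F) {z : L} (hz : z ∈ Omega F) : jf F γ z ≠ 0 := by
  intro h
  by_cases hc : Mc F γ 1 0 = 0
  · have hd : Mc F γ 1 1 = 0 := by simpa [jf, hc] using h
    exact detL_ne_zero F γ (by rw [detL_eq, hc, hd]; ring)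
  · rw [jf] at h
    apply hz
    rw [show z = -Mc F γ 1 1 / Mc F γ 1 0 by
      rw [eq_div_iff hc]
      linear_combination h]
    exact F.div_mem (F.neg_mem (Mc_mem F γ 1 1)) (Mc_mem F γ 1 0)

lemma act_mem (γ : GL (Fin 2) F) {z : L} (hz : z ∈ Omega F) : act F γ z ∈ Omega F := by
  intro ht
  set t := act F γ z
  have h : Mc F γ 0 0 * z + Mc F γ 0 1 = t * (Mc F γ 1 0 * z + Mc F γ 1 1) :=
    (div_mul_cancel₀ _ (jf_ne_zero F γ hz)).symm
  by_cases hca : Mc F γ 0 0 - t * Mc F γ 1 0 = 0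
  · apply detL_ne_zero F γ
    rw [detL_eq]
    linear_combination Mc F γ 1 1 * hca - Mc F γ 1 0 * (h - z * hca)
  · apply hz
    rw [show z = (t * Mc F γ 1 1 - Mc F γ 0 1) / (Mc F γ 0 0 - t * Mc F γ 1 0) by
      rw [eq_div_iff hca]
      linear_combination h]
    exact F.div_mem (F.sub_mem (F.mul_mem ht (Mc_mem F γ 1 1)) (Mc_mem F γ 0 1))
      (F.sub_mem (Mc_mem F γ 0 0) (F.mul_mem ht (Mc_mem F γ 1 0)))

lemma Mc_mul (γ δ : GL (Fin 2) F) (i j : Fin 2) :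
    Mc F (γ * δ) i j = Mc F γ i 0 * Mc F δ 0 j + Mc F γ i 1 * Mc F δ 1 j := by
  simp [Mc, Matrix.mul_apply, Fin.sum_univ_two]

lemma jf_mul (γ δ : GL (Fin 2) F) {z : L} (hz : z ∈ Omega F) :
    jf F (γ * δ) z = jf F γ (act F δ z) * jf F δ z := by
  have h := jf_ne_zero F δ hz
  simp only [jf, act, Mc_mul] at h ⊢
  field_simp
  ring

lemma act_mul (γ δ : GL (Fin 2) F) {z : L} (hz : z ∈ Omega F) :
    act F (γ * δ) z = act F γ (act F δ z) := by
  have hδ := jf_ne_zero F δ hz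
  have hγ := jf_ne_zero F γ (act_mem F δ hz)
  have hγδ := jf_ne_zero F (γ * δ) hz
  have hjm := jf_mul F γ δ hz
  simp only [act, jf, Mc_mul] at hγ hγδ hjm hδ ⊢
  rw [div_eq_div_iff hγδ hγ, hjm]
  field_simp
  ring

lemma act_one (z : L) : act F 1 z = z := by
  simp [act, jf, Mc]

lemma act_act_inv (γ : GL (Fin 2) F) {z : L} (hz : z ∈ Omega F) :
    act F γ (act F γ⁻¹ z) = z := by
  rw [← act_mul F γ γ⁻¹ hz, mul_inv_cancel, act_one]

def lowerUnipotent (x : F) : GL (Fin 2) F :=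
  Matrix.GeneralLinearGroup.mkOfDetNeZero !![1, 0; x, 1] (by simp [Matrix.det_fin_two_of])

@[simp]
lemma Mc_lowerUnipotent (x : F) (i j : Fin 2) :
    Mc F (lowerUnipotent F x) i j = ((!![1, 0; x, 1] : Matrix (Fin 2) (Fin 2) F) i j : L) :=
  rfl

lemma detL_lowerUnipotent (x : F) : detL F (lowerUnipotent F x) = 1 := by
  simp [detL_eq]

lemma jf_lowerUnipotent (x : F) (z : L) : jf F (lowerUnipotent F x) z = x * z + 1 := by
  simp [jf]

lemma act_lowerUnipotent (x : F) (z : L) : act F (lowerUnipotent F x) z = z / (x * z + 1) := by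
  simp [act, jf]

lemma iL_injective {Fq : Type*} [Field Fq] (ι : Polynomial Fq →+* F)
    (hι : Function.Injective ι) : Function.Injective (iL F ι) :=
  Subtype.val_injective.comp hι

lemma inGammaN_lowerUnipotent {Fq : Type*} [Field Fq] (ι : Polynomial Fq →+* F)
    {𝔫 : Ideal (Polynomial Fq)} {a : Polynomial Fq} (ha : a ∈ 𝔫) :
    InGammaN F ι 𝔫 (lowerUnipotent F (ι a)) := by
  refine ⟨!![1, 0; a, 1], fun i j => ?_, by simp [Matrix.det_fin_two_of], fun i j => ?_⟩ <;>
    fin_cases i <;> fin_cases j <;> simp [iL, ha]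

lemma exponent_eq_of_periodic {Fq : Type*} [Field Fq] (ι : Polynomial Fq →+* F)
    (hι : Function.Injective ι) {A B : L → L} {n n' : ℕ}
    (hA : ∃ I : Ideal (Polynomial Fq), I ≠ ⊥ ∧
      ∀ a ∈ I, ∀ z ∈ Omega F, A (z + iL F ι a) = A z)
    (hB : ∃ I : Ideal (Polynomial Fq), I ≠ ⊥ ∧
      ∀ a ∈ I, ∀ z ∈ Omega F, B (z + iL F ι a) = B z)
    (hrel : ∀ z ∈ Omega F, (-z) ^ n' * A z = (-z) ^ n * B z)
    (hB0 : ∃ z ∈ Omega F, B z ≠ 0) : n' = n := by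
  obtain ⟨I, hI, hAI⟩ := hA
  obtain ⟨J, hJ, hBJ⟩ := hB
  obtain ⟨z₀, hz₀, hBz₀⟩ := hB0
  have hA0 : A z₀ ≠ 0 := fun h0 => by
    simpa [h0, hBz₀, ne_zero_of_mem_omega F hz₀] using hrel z₀ hz₀
  have hIJ : ((I * J : Ideal (Polynomial Fq)) : Set (Polynomial Fq)).Infinite :=
    Ideal.infinite_coe_of_ne_bot (Ideal.mul_eq_bot.not.mpr (not_or.mpr ⟨hI, hJ⟩))
  -- at the common periods `s`, the relation at `z₀ + s` is a polynomial identity in `s`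
  have hpoly : C (A z₀) * (-(X + C z₀)) ^ n' = C (B z₀) * (-(X + C z₀)) ^ n := by
    refine eq_of_infinite_eval_eq _ _ ((hIJ.image (iL_injective F ι hι).injOn).mono ?_)
    rintro _ ⟨a, ha, rfl⟩
    have haI : a ∈ I := Ideal.mul_le_left (I := I) (J := J) ha
    have haJ : a ∈ J := Ideal.mul_le_right (I := I) (J := J) ha
    have h := hrel (z₀ + iL F ι a) (add_mem_omega F hz₀ (ι a))
    rw [hAI a haI z₀ hz₀, hBJ a haJ z₀ hz₀] at h
    simp only [Set.mem_ofPred_eq, eval_mul, eval_C, eval_pow, eval_neg, eval_add, eval_X]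
    rw [add_comm, mul_comm, h, mul_comm]
  have hdeg := congrArg natDegree hpoly
  rwa [natDegree_C_mul hA0, natDegree_C_mul hBz₀, natDegree_pow, natDegree_pow, natDegree_neg,
    natDegree_X_add_C, mul_one, mul_one] at hdeg

section Determinant

variable (ι : Polynomial Fq →+* F)

lemma detL_pow_card_sub_one {γ : GL (Fin 2) F} (hγ : InGamma0 F ι ⊤ γ) :
    detL F γ ^ (Fintype.card Fq - 1) = 1 := by
  obtain ⟨M, hM, hMdet, -⟩ := hγ
  obtain ⟨r, hr, hrM⟩ := Polynomial.isUnit_iff.mp hMdet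
  have hdet : detL F γ = iL F ι M.det := by
    simp only [detL_eq, ← hM, Matrix.det_fin_two, iL, map_sub, map_mul]
    push_cast
    ring
  rw [hdet, ← hrM, iL, ← SubmonoidClass.coe_pow, ← map_pow, ← C_pow,
    FiniteField.pow_card_sub_one_eq_one r hr.ne_zero, C_1, map_one, OneMemClass.coe_one]

lemma ncard_detL_image_dvd_sub (Γ : Subgroup (GL (Fin 2) F))
    (hΓA : ∀ γ ∈ Γ, InGamma0 F ι ⊤ γ) {m m' : ℤ}
    (hm : ∀ γ ∈ Γ, detL F γ ^ m = detL F γ ^ m') :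
    (Set.ncard (detL F '' (Γ : Set (GL (Fin 2) F))) : ℤ) ∣ m - m' := by
  let φ : GL (Fin 2) F →* Lˣ :=
    (Units.map F.subtype.toMonoidHom).comp Matrix.GeneralLinearGroup.det
  let H : Subgroup Lˣ := Γ.map φ
  have hH : H ≤ rootsOfUnity (Fintype.card Fq - 1) L := by
    rintro _ ⟨γ, hγ, rfl⟩
    exact (mem_rootsOfUnity _ _).2 (Units.ext (detL_pow_card_sub_one F ι (hΓA γ hγ)))
  have : NeZero (Fintype.card Fq - 1) := ⟨(Nat.sub_pos_of_lt Fintype.one_lt_card).ne'⟩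
  have : Finite H := Finite.of_injective _ (Subgroup.inclusion_injective hH)
  have hcard : Set.ncard (detL F '' (Γ : Set (GL (Fin 2) F))) = Nat.card H := by
    have himg : detL F '' (Γ : Set (GL (Fin 2) F)) = Units.val '' (H : Set Lˣ) := by
      rw [Subgroup.coe_map, Set.image_image]
      rfl
    rw [himg, Set.ncard_image_of_injective _ Units.val_injective, ← Nat.card_coe_set_eq]
    rfl
  rw [hcard, ← IsCyclic.exponent_eq_card, Group.exponent_dvd_sub_iff_zpow_eq_zpow]
  rintro ⟨_, γ, hγ, rfl⟩
  exact Subtype.ext (Units.ext (by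
    simp only [SubgroupClass.coe_zpow, Units.val_zpow_eq_zpow_val]
    exact hm γ hγ))

end Determinant

section QuasiModular

variable {S : Set (GL (Fin 2) F)} {k k' m m' : ℤ} {ℓ ℓ' : ℕ} {f : L → L}
  {fam gam : ℕ → L → L}

lemma IsQM.eval_assocPoly_of_lowerUnipotent_mem (hQ : IsQM F S k m ℓ f fam) {x : F}
    (hx : lowerUnipotent F x ∈ S) {z : L} (hz : z ∈ Omega F) :
    (assocPoly ℓ fam z).eval ((x : L) / (x * z + 1)) =
      ((x : L) * z + 1) ^ (-k) * f (z / (x * z + 1)) := by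
  have hc : Mc F (lowerUnipotent F x) 1 0 = x := by simp
  have h := hQ.2 _ hx z hz
  simp only [slash, detL_lowerUnipotent, jf_lowerUnipotent, act_lowerUnipotent, hc, one_zpow,
    one_mul] at h
  rw [eval_assocPoly, h]

lemma IsQM.linear_pow_mul_assocPoly_eq (hQ : IsQM F S k m ℓ f fam)
    (hQ' : IsQM F S k' m' ℓ' f gam) {T : Set F} (hT : T.Infinite)
    (hTS : ∀ x ∈ T, lowerUnipotent F x ∈ S) {z : L} (hz : z ∈ Omega F) :
    (C (-z) * X + 1) ^ (k' - k).toNat * assocPoly ℓ fam z =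
      (C (-z) * X + 1) ^ (k - k').toNat * assocPoly ℓ' gam z := by
  have hu : ∀ x : F, (x : L) * z + 1 ≠ 0 := fun x => by
    simpa [jf_lowerUnipotent] using jf_ne_zero F (lowerUnipotent F x) hz
  have hτ : Set.InjOn (fun x : F => (x : L) / (x * z + 1)) T := by
    intro x _ y _ hxy
    rw [div_eq_div_iff (hu x) (hu y)] at hxy
    exact Subtype.ext (by linear_combination hxy)
  refine eq_of_infinite_eval_eq _ _ ((hT.image hτ).mono ?_)
  rintro _ ⟨x, hx, rfl⟩
  have h1 : -z * ((x : L) / (x * z + 1)) + 1 = ((x : L) * z + 1)⁻¹ := by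
    rw [← one_div, eq_div_iff (hu x), add_mul, mul_assoc, div_mul_cancel₀ _ (hu x)]
    ring
  simp only [Set.mem_ofPred_eq, eval_mul, eval_pow, eval_add, eval_C, eval_X, eval_one, h1,
    hQ.eval_assocPoly_of_lowerUnipotent_mem F (hTS x hx) hz,
    hQ'.eval_assocPoly_of_lowerUnipotent_mem F (hTS x hx) hz]
  rw [← mul_assoc, ← mul_assoc, ← zpow_natCast, ← zpow_natCast, inv_zpow', inv_zpow',
    ← zpow_add₀ (hu x), ← zpow_add₀ (hu x)]
  congr 2
  omega


lemma add_depth_le_of_linear_pow_mul_assocPoly_eq {n₁ n₂ ℓ₁ ℓ₂ : ℕ}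
    {fam₁ fam₂ : ℕ → L → L}
    (h : ∀ z ∈ Omega F, (C (-z) * X + 1) ^ n₁ * assocPoly ℓ₁ fam₁ z =
      (C (-z) * X + 1) ^ n₂ * assocPoly ℓ₂ fam₂ z)
    (hne : ∃ z ∈ Omega F, fam₁ ℓ₁ z ≠ 0) : n₁ + ℓ₁ ≤ n₂ + ℓ₂ := by
  obtain ⟨z, hz, hz0⟩ := hne
  exact add_le_add_of_linear_pow_mul_eq (neg_ne_zero.2 (ne_zero_of_mem_omega F hz)) (h z hz)
    (by rwa [coeff_assocPoly le_rfl]) (natDegree_assocPoly_le _ _ _)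

lemma IsQM.weight_eq_and_depth_eq {Fq : Type*} [Field Fq] (ι : Polynomial Fq →+* F)
    (hι : Function.Injective ι) (hQ : IsQM F S k m ℓ f fam) (hQ' : IsQM F S k' m' ℓ' f gam)
    {T : Set F} (hT : T.Infinite) (hTS : ∀ x ∈ T, lowerUnipotent F x ∈ S)
    (hfl : ∃ z ∈ Omega F, fam ℓ z ≠ 0) (hgl : ∃ z ∈ Omega F, gam ℓ' z ≠ 0)
    (hper : ∃ I : Ideal (Polynomial Fq), I ≠ ⊥ ∧
      ∀ a ∈ I, ∀ z ∈ Omega F, fam ℓ (z + iL F ι a) = fam ℓ z)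
    (hper' : ∃ I : Ideal (Polynomial Fq), I ≠ ⊥ ∧
      ∀ a ∈ I, ∀ z ∈ Omega F, gam ℓ' (z + iL F ι a) = gam ℓ' z) :
    k = k' ∧ ℓ = ℓ' := by
  have hrel := fun z (hz : z ∈ Omega F) => hQ.linear_pow_mul_assocPoly_eq F hQ' hT hTS hz
  have hdeg : (k' - k).toNat + ℓ = (k - k').toNat + ℓ' :=
    le_antisymm (add_depth_le_of_linear_pow_mul_assocPoly_eq F hrel hfl)
      (add_depth_le_of_linear_pow_mul_assocPoly_eq F (fun z hz => (hrel z hz).symm) hgl)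
  have htop : ∀ z ∈ Omega F,
      (-z) ^ (k' - k).toNat * fam ℓ z = (-z) ^ (k - k').toNat * gam ℓ' z := by
    intro z hz
    have h := congrArg (coeff · ((k' - k).toNat + ℓ)) (hrel z hz)
    rwa [coeff_linear_pow_mul _ (natDegree_assocPoly_le _ _ _), hdeg,
      coeff_linear_pow_mul _ (natDegree_assocPoly_le _ _ _), coeff_assocPoly le_rfl,
      coeff_assocPoly le_rfl] at h
  have hexp := exponent_eq_of_periodic F ι hι hper hper' htop hgl
  omega

lemma IsQM.detL_zpow_eq (hQ : IsQM F S k m ℓ f fam) (hQ' : IsQM F S k m' ℓ f gam)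
    (hfg : ∀ i ≤ ℓ, Set.EqOn (fam i) (gam i) (Omega F)) (hf : ∃ z ∈ Omega F, f z ≠ 0)
    {γ : GL (Fin 2) F} (hγ : γ ∈ S) : detL F γ ^ m = detL F γ ^ m' := by
  obtain ⟨z₀, hz₀, hfz₀⟩ := hf
  have hz : act F γ⁻¹ z₀ ∈ Omega F := act_mem F γ⁻¹ hz₀
  have h := (hQ.2 γ hγ _ hz).trans <| (Finset.sum_congr rfl fun i hi => by
    rw [hfg i (Nat.lt_succ_iff.mp (Finset.mem_range.mp hi)) hz]).trans (hQ'.2 γ hγ _ hz).symm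
  simp only [slash, act_act_inv F γ hz₀, mul_assoc] at h
  exact mul_right_cancel₀ (mul_ne_zero (zpow_ne_zero _ (jf_ne_zero F γ hz)) hfz₀) h

end QuasiModular

end

/-- Uniqueness of the associated polynomial (Proposition 2.2). -/
theorem associated_polynomial_unique
    {L : Type*} [Field L] {Fq : Type*} [Field Fq] [Fintype Fq]
    (F : Subfield L) (ι : Polynomial Fq →+* F) (hι : Function.Injective ι)
    (Γ : Subgroup (GL (Fin 2) F))
    (hΓA : ∀ γ ∈ Γ, InGamma0 F ι ⊤ γ)
    (𝔫 : Ideal (Polynomial Fq)) (h𝔫 : 𝔫 ≠ ⊥)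
    (hΓ𝔫 : ∀ γ : GL (Fin 2) F, InGammaN F ι 𝔫 γ → γ ∈ Γ)
    (k k' m m' : ℤ) (ℓ ℓ' : ℕ) (f : L → L)
    (hf : ∃ z ∈ Omega F, f z ≠ 0)
    (fam gam : ℕ → L → L)
    (hQM : IsQM F (Γ : Set (GL (Fin 2) F)) k m ℓ f fam)
    (hQM' : IsQM F (Γ : Set (GL (Fin 2) F)) k' m' ℓ' f gam)
    (hfl : ∃ z ∈ Omega F, fam ℓ z ≠ 0)
    (hgl : ∃ z ∈ Omega F, gam ℓ' z ≠ 0)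
    (hper : ∀ i ≤ ℓ, ∃ I : Ideal (Polynomial Fq), I ≠ ⊥ ∧
      ∀ a ∈ I, ∀ z ∈ Omega F, fam i (z + iL F ι a) = fam i z)
    (hper' : ∀ i ≤ ℓ', ∃ I : Ideal (Polynomial Fq), I ≠ ⊥ ∧
      ∀ a ∈ I, ∀ z ∈ Omega F, gam i (z + iL F ι a) = gam i z) :
    k = k' ∧ ℓ = ℓ' ∧ (∀ i ≤ ℓ, Set.EqOn (fam i) (gam i) (Omega F)) ∧
      ((Set.ncard (detL F '' (Γ : Set (GL (Fin 2) F))) : ℤ) ∣ (m - m')) := by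
  have hT : (ι '' 𝔫).Infinite := (Ideal.infinite_coe_of_ne_bot h𝔫).image hι.injOn
  have hTΓ : ∀ x ∈ ι '' 𝔫, lowerUnipotent F x ∈ (Γ : Set (GL (Fin 2) F)) := by
    rintro _ ⟨a, ha, rfl⟩
    exact hΓ𝔫 _ (inGammaN_lowerUnipotent F ι ha)
  obtain ⟨rfl, rfl⟩ := hQM.weight_eq_and_depth_eq F ι hι hQM' hT hTΓ hfl hgl
    (hper ℓ le_rfl) (hper' ℓ' le_rfl)
  have hfg : ∀ i ≤ ℓ, Set.EqOn (fam i) (gam i) (Omega F) := fun i hi z hz => by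
    simpa [coeff_assocPoly hi] using
      congrArg (coeff · i) (hQM.linear_pow_mul_assocPoly_eq F hQM' hT hTΓ hz)
  exact ⟨rfl, rfl, hfg,
    ncard_detL_image_dvd_sub F ι Γ hΓA fun γ hγ => hQM.detL_zpow_eq F hQM' hfg hf hγ⟩

end DrinfeldQM
end
end

section
/- (Lemma 5.10) Assume 𝔽_q(T) ⊆ F, let 𝔪 ⊆ A be a nonzero ideal with 𝔭 ∤ 𝔪, let n ≥ 0, and assume E satisfies its functional equation for all γ ∈ GL₂(A). Let f : Ω → L be modular of weight k−2n and type m−n for Γ₀(𝔪𝔭). Then, pointwise on Ω: U_𝔭(f·Eⁿ) = U_𝔭(f·E_𝔭ⁿ) − Σ_{h=1}^{n} (n choose h)·(−℘)^h·U_𝔭(f·E^{n−h})·E^h. -/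
/-!
The functional equation of `E` for the translations `(1, Q; 0, 1)`, `Q ∈ A`, makes `E`
`A`-periodic. At every point `(z + Q)/℘` summed over by `U_𝔭` this gives
`δ_𝔭E((z + Q)/℘) = E(z + Q) = E(z)`, so there `E_𝔭 = E - ℘ E(z)` with `E(z)` a constant.
Expanding `E_𝔭ⁿ` binomially and using the linearity of `U_𝔭` gives the identity.
-/

noncomputable section

namespace DrinfeldQM

variable {L : Type*} [Field L]

variable {Fq : Type*} [Field Fq] [Fintype Fq]

theorem _root_.add_pow_eq_pow_add_sum_Icc {R : Type*} [CommSemiring R] (x y : R) (n : ℕ) :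
    (x + y) ^ n = x ^ n + ∑ h ∈ Finset.Icc 1 n, (n.choose h : R) * y ^ h * x ^ (n - h) := by
  rw [add_comm x y, add_pow, Finset.range_eq_Ico,
    Finset.sum_eq_sum_Ico_succ_bot (by omega : 0 < n + 1), zero_add,
    Finset.Ico_add_one_right_eq_Icc]
  simp only [pow_zero, one_mul, Nat.sub_zero, Nat.choose_zero_right, Nat.cast_one, mul_one]
  congr 1
  exact Finset.sum_congr rfl fun h _ => by ring

open Matrix.GeneralLinearGroup

variable (F : Subfield L)

section Translation

variable (a : F) (z : L)

theorem Mc_upperRightHom_one_zero : Mc F (upperRightHom a) 1 0 = 0 := by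
  simp [Mc]

theorem jf_upperRightHom : jf F (upperRightHom a) z = 1 := by
  simp [jf, Mc]

theorem detL_upperRightHom : detL F (upperRightHom a) = 1 := by
  simp [detL, Matrix.det_fin_two_of]

theorem act_upperRightHom : act F (upperRightHom a) z = z + a := by
  rw [act, jf_upperRightHom]
  simp [Mc]

theorem EFunEq.apply_add {S : Set (GL (Fin 2) F)} {π : L} {E : L → L} (hE : EFunEq F S π E)
    (ha : upperRightHom a ∈ S) {z : L} (hz : z ∈ Omega F) : E (z + a) = E z := by
  have h := hE _ ha z hz
  rwa [act_upperRightHom, jf_upperRightHom, detL_upperRightHom, Mc_upperRightHom_one_zero,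
    zero_div, sub_zero, inv_one, one_pow, one_mul, one_mul] at h

end Translation

theorem inGamma0_top_upperRightHom {K : Type*} [Field K] (ι : Polynomial K →+* F)
    (Q : Polynomial K) :
    InGamma0 F ι ⊤ (upperRightHom (ι Q)) := by
  refine ⟨!![1, Q; 0, 1], fun i j => ?_, by simp [Matrix.det_fin_two_of], trivial⟩
  fin_cases i <;> fin_cases j <;> simp [iL, Mc]

section UP

variable (ι : Polynomial Fq →+* F) (℘ : Polynomial Fq) (z : L)

theorem UP_congr {g g' : L → L}
    (h : ∀ Q : Polynomial Fq, g ((z + iL F ι Q) / iL F ι ℘) = g' ((z + iL F ι Q) / iL F ι ℘)) :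
    UP F ι ℘ g z = UP F ι ℘ g' z :=
  Finset.sum_congr rfl fun _ _ => h _

theorem UP_add (g₁ g₂ : L → L) :
    UP F ι ℘ (fun w => g₁ w + g₂ w) z = UP F ι ℘ g₁ z + UP F ι ℘ g₂ z :=
  Finset.sum_add_distrib

theorem UP_sum {β : Type*} (s : Finset β) (g : β → L → L) :
    UP F ι ℘ (fun w => ∑ i ∈ s, g i w) z = ∑ i ∈ s, UP F ι ℘ (g i) z :=
  Finset.sum_comm

theorem UP_const_mul_mul_const (a b : L) (g : L → L) :
    UP F ι ℘ (fun w => a * g w * b) z = a * UP F ι ℘ g z * b := by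
  simp only [UP, Finset.mul_sum, Finset.sum_mul]

end UP

theorem Ep_apply_add_div {K : Type*} [Field K] (ι : Polynomial K →+* F) {π : L} {E : L → L}
    (hE : EFunEq F {γ : GL (Fin 2) F | InGamma0 F ι ⊤ γ} π E) (℘ Q : Polynomial K)
    {z : L} (hz : z ∈ Omega F) :
    Ep F ι ℘ E ((z + iL F ι Q) / iL F ι ℘) =
      E ((z + iL F ι Q) / iL F ι ℘) + -iL F ι ℘ * E z := by
  rw [Ep, deltaP, neg_mul, ← sub_eq_add_neg]
  congr 1
  -- if `℘ = 0` in `L`, the division is junk (`x / 0 = 0`), but both sides vanish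
  rcases eq_or_ne (iL F ι ℘) 0 with h℘ | h℘
  · simp [h℘]
  · rw [mul_div_cancel₀ _ h℘]
    exact congrArg _ (hE.apply_add F _ (inGamma0_top_upperRightHom F ι Q) hz)

theorem Up_mul_E_pow_rec_general
    {L : Type*} [Field L] {Fq : Type*} [Field Fq] [Fintype Fq]
    (F : Subfield L) (ι : Polynomial Fq →+* F)
    (℘ : Polynomial Fq)
    (π : L) (E : L → L)
    (hE : EFunEq F {γ : GL (Fin 2) F | InGamma0 F ι ⊤ γ} π E)
    (n : ℕ) (f : L → L) :
    ∀ z ∈ Omega F,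
      UP F ι ℘ (fun w => f w * E w ^ n) z =
        UP F ι ℘ (fun w => f w * Ep F ι ℘ E w ^ n) z -
          ∑ h ∈ Finset.Icc 1 n,
            (n.choose h : L) * (-(iL F ι ℘)) ^ h *
              UP F ι ℘ (fun w => f w * E w ^ (n - h)) z * E z ^ h := by
  intro z hz
  have expand : UP F ι ℘ (fun w => f w * Ep F ι ℘ E w ^ n) z =
      UP F ι ℘ (fun w => f w * E w ^ n + ∑ h ∈ Finset.Icc 1 n,
        (n.choose h : L) * (-(iL F ι ℘)) ^ h * (f w * E w ^ (n - h)) * E z ^ h) z := by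
    refine UP_congr F ι ℘ z fun Q => ?_
    rw [Ep_apply_add_div F ι hE ℘ Q hz, add_pow_eq_pow_add_sum_Icc, mul_add, Finset.mul_sum]
    congr 1
    exact Finset.sum_congr rfl fun h _ => by ring
  rw [expand, UP_add, UP_sum]
  simp only [UP_const_mul_mul_const]
  ring

/-- Lemma 5.10: `U_𝔭(f·Eⁿ) = U_𝔭(f·E_𝔭ⁿ) - ∑_{h=1}^{n} (n choose h)(-℘)ʰ U_𝔭(f·E^{n-h}) Eʰ`. -/
theorem Up_mul_E_pow_rec
    {L : Type*} [Field L] {Fq : Type*} [Field Fq] [Fintype Fq]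
    (F : Subfield L) (ι : Polynomial Fq →+* F) (hι : Function.Injective ι)
    (℘ : Polynomial Fq) (hmon : ℘.Monic) (hirr : Irreducible ℘)
    (𝔪 : Ideal (Polynomial Fq)) (h𝔪 : ¬ 𝔪 ≤ Ideal.span {℘})
    (π : L) (hπ : π ≠ 0) (E : L → L)
    (hE : EFunEq F {γ : GL (Fin 2) F | InGamma0 F ι ⊤ γ} π E)
    (k m : ℤ) (n : ℕ) (f : L → L)
    (hf : IsModularOn F ι (𝔪 * Ideal.span {℘}) (k - 2 * (n : ℤ)) (m - (n : ℤ)) f) :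
    ∀ z ∈ Omega F,
      UP F ι ℘ (fun w => f w * E w ^ n) z =
        UP F ι ℘ (fun w => f w * Ep F ι ℘ E w ^ n) z -
          ∑ h ∈ Finset.Icc 1 n,
            (n.choose h : L) * (-(iL F ι ℘)) ^ h *
              UP F ι ℘ (fun w => f w * E w ^ (n - h)) z * E z ^ h :=
  Up_mul_E_pow_rec_general F ι ℘ π E hE n f

end DrinfeldQM
end
end
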